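/- arXiv:1907.00658 — 2 statements merged into one kernel-verified Lean document; each statement's English description precedes it below -/
import Mathlib

section
/- There exists a primitive recursive relation on ℕ² that is not definable by any Δ₀ (bounded) formula over the standard model of arithmetic; in particular, the Δ₀-satisfaction relation Sat_{Δ₀} is primitive recursive but not rudimentary. -/
/-- Terms of the language of arithmetic `⟨0, 1, +, ×⟩` with variables among `v₀, …, v_{n-1}`. -/
inductive ATerm : ℕ → Type
  | zero {n} : ATerm n
  | one {n} : ATerm n
  | var {n} (i : Fin n) : ATerm n
  | add {n} (t s : ATerm n) : ATerm n
  | mul {n} (t s : ATerm n) : ATerm n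

/-- Evaluation of a term in the standard model `ℕ` under an assignment of the variables. -/
def ATerm.eval : ∀ {n}, ATerm n → (Fin n → ℕ) → ℕ
  | _, .zero, _ => 0
  | _, .one, _ => 1
  | _, .var i, v => v i
  | _, .add t s, v => t.eval v + s.eval v
  | _, .mul t s, v => t.eval v * s.eval v

/-- Bounded (Δ₀) formulas of the language of arithmetic `⟨0, 1, +, ×, ≤⟩` with free variables
among `v₀, …, v_{n-1}`: built from atomic formulas `t = s` and `t ≤ s` by Boolean connectives
and bounded quantifiers `∀ x ≤ t` and `∃ x ≤ t` (the newly bound variable is variable `0`,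
and the bound `t` may not contain it). -/
inductive Delta0 : ℕ → Type
  | eq {n} (t s : ATerm n) : Delta0 n
  | le {n} (t s : ATerm n) : Delta0 n
  | not {n} (φ : Delta0 n) : Delta0 n
  | and {n} (φ ψ : Delta0 n) : Delta0 n
  | or {n} (φ ψ : Delta0 n) : Delta0 n
  | imp {n} (φ ψ : Delta0 n) : Delta0 n
  | ball {n} (t : ATerm n) (φ : Delta0 (n + 1)) : Delta0 n
  | bex {n} (t : ATerm n) (φ : Delta0 (n + 1)) : Delta0 n

/-- Satisfaction of a Δ₀ formula in the standard model `ℕ`. -/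
def Delta0.Sat : ∀ {n}, Delta0 n → (Fin n → ℕ) → Prop
  | _, .eq t s, v => t.eval v = s.eval v
  | _, .le t s, v => t.eval v ≤ s.eval v
  | _, .not φ, v => ¬ φ.Sat v
  | _, .and φ ψ, v => φ.Sat v ∧ ψ.Sat v
  | _, .or φ ψ, v => φ.Sat v ∨ ψ.Sat v
  | _, .imp φ ψ, v => φ.Sat v → ψ.Sat v
  | _, .ball t φ, v => ∀ x ≤ t.eval v, φ.Sat (Fin.cons x v)
  | _, .bex t φ, v => ∃ x ≤ t.eval v, φ.Sat (Fin.cons x v)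

/-!
Truth of Δ₀ formulas is computed by recursion on Gödel codes: the value at a code `c` and an
assignment `l` is obtained from values at strictly smaller codes, a bounded quantifier `∀ x ≤ t`
calling its body at the finitely many extended assignments `x :: l` with `x ≤ t(l)`. The
assignments grow but the code decreases, which is exactly the shape of recursion that
`Primrec.nat_omega_rec'` turns into a primitive recursive function. The evaluator returns
`none` on numbers that code no formula, so it also decides which numbers are codes.

If a Δ₀ formula `φ(x, a)` defined the resulting relation, then `¬φ` would have a code `e`, and
the relation at `(e, e)` would give `¬φ(e, e) ↔ φ(e, e)`.
-/

theorem Option.isSome_map₂ {α β γ : Type*} {f : α → β → γ} {a : Option α} {b : Option β} :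
    (Option.map₂ f a b).isSome ↔ a.isSome ∧ b.isSome := by
  cases a <;> cases b <;> simp [Option.map₂]

namespace Primrec

variable {α β γ σ : Type*} [Primcodable α] [Primcodable β] [Primcodable γ] [Primcodable σ]

theorem option_map₂ {f : α → β → γ} {a : σ → Option α} {b : σ → Option β} (hf : Primrec₂ f)
    (ha : Primrec a) (hb : Primrec b) : Primrec fun s => Option.map₂ f (a s) (b s) :=
  option_bind ha (option_map (hb.comp fst) (hf.comp (snd.comp fst) snd).to₂).to₂

theorem list_replicate : Primrec₂ (List.replicate : ℕ → α → List α) :=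
  (list_map (list_range.comp fst) (snd.comp fst).to₂).to₂.of_eq fun n a => by
    simp [List.map_const']

end Primrec

namespace Code

/-- Codes have the form `mk tag payload`; the shift by one makes every component of the payload
strictly smaller than the code and leaves `0` as a non-code. -/
def mk (k p : ℕ) : ℕ := Nat.pair k p + 1

def tag (c : ℕ) : ℕ := (c - 1).unpair.1

def arg (c : ℕ) : ℕ := (c - 1).unpair.2

def left (c : ℕ) : ℕ := (arg c).unpair.1

def right (c : ℕ) : ℕ := (arg c).unpair.2

@[simp] theorem mk_ne_zero (k p : ℕ) : mk k p ≠ 0 := Nat.succ_ne_zero _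

@[simp] theorem tag_mk (k p : ℕ) : tag (mk k p) = k := by simp [tag, mk]

@[simp] theorem arg_mk (k p : ℕ) : arg (mk k p) = p := by simp [arg, mk]

@[simp] theorem left_mk (k a b : ℕ) : left (mk k (Nat.pair a b)) = a := by simp [left]

@[simp] theorem right_mk (k a b : ℕ) : right (mk k (Nat.pair a b)) = b := by simp [right]

theorem mk_injective : Function.Injective2 mk := fun _ _ _ _ h => by
  simpa [mk, Nat.pair_eq_pair] using h

theorem mk_tag_arg {c : ℕ} (hc : c ≠ 0) : mk (tag c) (arg c) = c := by
  simp only [mk, tag, arg, Nat.pair_unpair]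
  omega

theorem pair_left_right (c : ℕ) : Nat.pair (left c) (right c) = arg c := Nat.pair_unpair _

theorem arg_lt {c : ℕ} (hc : c ≠ 0) : arg c < c := by
  have := Nat.unpair_right_le (c - 1)
  simp only [arg]
  omega

theorem left_lt {c : ℕ} (hc : c ≠ 0) : left c < c := (Nat.unpair_left_le _).trans_lt (arg_lt hc)

theorem right_lt {c : ℕ} (hc : c ≠ 0) : right c < c := (Nat.unpair_right_le _).trans_lt (arg_lt hc)

theorem primrec_tag : Primrec tag := Primrec.fst.comp (Primrec.unpair.comp Primrec.pred)

theorem primrec_arg : Primrec arg := Primrec.snd.comp (Primrec.unpair.comp Primrec.pred)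

theorem primrec_left : Primrec left := Primrec.fst.comp (Primrec.unpair.comp primrec_arg)

theorem primrec_right : Primrec right := Primrec.snd.comp (Primrec.unpair.comp primrec_arg)

end Code

open Code

namespace ATerm

def gcode : ∀ {n}, ATerm n → ℕ
  | _, .zero => mk 0 0
  | _, .one => mk 1 0
  | _, .var i => mk 2 i
  | _, .add t s => mk 3 (Nat.pair t.gcode s.gcode)
  | _, .mul t s => mk 4 (Nat.pair t.gcode s.gcode)

theorem gcode_injective {n : ℕ} : Function.Injective (gcode (n := n)) := by
  intro t t' h
  induction t generalizing t' <;> cases t' <;>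
    simp only [gcode, mk_injective.eq_iff, Nat.pair_eq_pair, OfNat.ofNat_ne_zero,
      OfNat.zero_ne_ofNat, false_and] at h <;>
    grind [Fin.val_inj]

end ATerm

namespace Delta0

def gcode : ∀ {n}, Delta0 n → ℕ
  | _, .eq t s => mk 0 (Nat.pair t.gcode s.gcode)
  | _, .le t s => mk 1 (Nat.pair t.gcode s.gcode)
  | _, .not φ => mk 2 φ.gcode
  | _, .and φ ψ => mk 3 (Nat.pair φ.gcode ψ.gcode)
  | _, .or φ ψ => mk 4 (Nat.pair φ.gcode ψ.gcode)
  | _, .imp φ ψ => mk 5 (Nat.pair φ.gcode ψ.gcode)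
  | _, .ball t φ => mk 6 (Nat.pair t.gcode φ.gcode)
  | _, .bex t φ => mk 7 (Nat.pair t.gcode φ.gcode)

theorem gcode_injective {n : ℕ} : Function.Injective (gcode (n := n)) := by
  intro θ θ' h
  induction θ <;> cases θ' <;>
    simp only [gcode, mk_injective.eq_iff, Nat.pair_eq_pair, ATerm.gcode_injective.eq_iff] at h <;>
    grind

def sigmaGcode (θ : Σ k, Delta0 k) : ℕ := Nat.pair θ.1 θ.2.gcode

theorem sigmaGcode_injective : Function.Injective sigmaGcode := by
  rintro ⟨k, θ⟩ ⟨k', θ'⟩ h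
  simp only [sigmaGcode, Nat.pair_eq_pair] at h
  obtain ⟨rfl, h⟩ := h
  rw [gcode_injective h]

end Delta0

def termChildren (b : ℕ × List ℕ) : List (ℕ × List ℕ) :=
  if b.1 = 0 then [] else [(left b.1, b.2), (right b.1, b.2)]

def termStep (b : ℕ × List ℕ) (vs : List (Option ℕ)) : Option ℕ :=
  if b.1 = 0 then none
  else if tag b.1 = 0 then (if arg b.1 = 0 then some 0 else none)
  else if tag b.1 = 1 then (if arg b.1 = 0 then some 1 else none)
  else if tag b.1 = 2 then b.2[arg b.1]?
  else if tag b.1 = 3 then Option.map₂ (· + ·) (vs.getD 0 none) (vs.getD 1 none)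
  else if tag b.1 = 4 then Option.map₂ (· * ·) (vs.getD 0 none) (vs.getD 1 none)
  else none

theorem lt_of_mem_termChildren {b b' : ℕ × List ℕ} (h : b' ∈ termChildren b) : b'.1 < b.1 := by
  unfold termChildren at h
  split_ifs at h with hb
  · simp at h
  · rcases List.mem_pair.1 h with rfl | rfl
    exacts [left_lt hb, right_lt hb]

/-- `termValue (c, l)` is the value of the term with code `c` under `vᵢ ↦ l[i]`, and `none`
if `c` codes no term whose variables are among `v₀, …, v_{|l|-1}`. -/
def termValue (b : ℕ × List ℕ) : Option ℕ :=
  termStep b ((termChildren b).attach.map fun b' => termValue b'.1)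
termination_by b.1
decreasing_by exact lt_of_mem_termChildren b'.2

theorem termValue_eq (b : ℕ × List ℕ) :
    termValue b = termStep b ((termChildren b).map termValue) := by
  rw [termValue, List.attach_map_val]

theorem termValue_gcode {n : ℕ} (t : ATerm n) (v : Fin n → ℕ) :
    termValue (t.gcode, List.ofFn v) = some (t.eval v) := by
  induction t <;> rw [termValue_eq] <;>
    simp_all [termStep, termChildren, ATerm.gcode, ATerm.eval, Option.map₂]

theorem exists_gcode_eq_of_isSome_termValue (c : ℕ) {l : List ℕ}
    (h : (termValue (c, l)).isSome) : ∃ t : ATerm l.length, t.gcode = c := by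
  induction c using Nat.strong_induction_on with
  | _ c ih =>
    rcases eq_or_ne c 0 with rfl | hc
    · simp [termValue_eq, termStep] at h
    rw [termValue_eq] at h
    rw [← mk_tag_arg hc]
    rcases hk : tag c with _ | _ | _ | _ | _ | k <;>
      simp [termStep, termChildren, hc, hk, Option.isSome_map₂] at h
    · exact ⟨.zero, by simp [ATerm.gcode, h]⟩
    · exact ⟨.one, by simp [ATerm.gcode, h]⟩
    · exact ⟨.var ⟨arg c, h⟩, by simp [ATerm.gcode]⟩
    all_goals
      obtain ⟨t, ht⟩ := ih _ (left_lt hc) h.1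
      obtain ⟨s, hs⟩ := ih _ (right_lt hc) h.2
    · exact ⟨.add t s, by simp [ATerm.gcode, ht, hs, pair_left_right]⟩
    · exact ⟨.mul t s, by simp [ATerm.gcode, ht, hs, pair_left_right]⟩

theorem primrec_termChildren : Primrec termChildren := by
  have hc : Primrec fun b : ℕ × List ℕ => b.1 := Primrec.fst
  exact Primrec.ite (PrimrecRel.comp Primrec.eq hc (Primrec.const 0)) (Primrec.const [])
    (Primrec.list_cons.comp (Primrec.pair (primrec_left.comp hc) Primrec.snd)
      (Primrec.list_cons.comp (Primrec.pair (primrec_right.comp hc) Primrec.snd)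
        (Primrec.const [])))

theorem primrec_termStep : Primrec₂ termStep := by
  have hc : Primrec fun q : (ℕ × List ℕ) × List (Option ℕ) => q.1.1 :=
    Primrec.fst.comp Primrec.fst
  have hv : ∀ i, Primrec fun q : (ℕ × List ℕ) × List (Option ℕ) => q.2.getD i none :=
    fun i => (Primrec.list_getD none).comp Primrec.snd (Primrec.const i)
  have htag : ∀ k, PrimrecPred fun q : (ℕ × List ℕ) × List (Option ℕ) => tag q.1.1 = k :=
    fun k => PrimrecRel.comp Primrec.eq (primrec_tag.comp hc) (Primrec.const k)
  have harg : PrimrecPred fun q : (ℕ × List ℕ) × List (Option ℕ) => arg q.1.1 = 0 :=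
    PrimrecRel.comp Primrec.eq (primrec_arg.comp hc) (Primrec.const 0)
  refine Primrec₂.mk <| Primrec.ite (PrimrecRel.comp Primrec.eq hc (Primrec.const 0))
    (Primrec.const none) <| Primrec.ite (htag 0)
    (Primrec.ite harg (Primrec.const (some 0)) (Primrec.const none)) <| Primrec.ite (htag 1)
    (Primrec.ite harg (Primrec.const (some 1)) (Primrec.const none)) <| Primrec.ite (htag 2)
    (Primrec.list_getElem?.comp (Primrec.snd.comp Primrec.fst) (primrec_arg.comp hc)) <|
    Primrec.ite (htag 3) (Primrec.option_map₂ Primrec.nat_add (hv 0) (hv 1)) <|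
    Primrec.ite (htag 4) (Primrec.option_map₂ Primrec.nat_mul (hv 0) (hv 1)) (Primrec.const none)

theorem primrec_termValue : Primrec termValue :=
  Primrec.nat_omega_rec' termValue Primrec.fst primrec_termChildren
    (Primrec.option_some.comp primrec_termStep).to₂ (fun _ _ => lt_of_mem_termChildren)
    (fun b => by rw [termValue_eq])

def formulaChildren (b : ℕ × List ℕ) : List (ℕ × List ℕ) :=
  if b.1 = 0 then []
  else if tag b.1 = 2 then [(arg b.1, b.2)]
  else if tag b.1 = 3 ∨ tag b.1 = 4 ∨ tag b.1 = 5 then [(left b.1, b.2), (right b.1, b.2)]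
  else if tag b.1 = 6 ∨ tag b.1 = 7 then
    (List.range ((termValue (left b.1, b.2)).getD 0 + 1)).map fun x => (right b.1, x :: b.2)
  else []

def formulaStep (b : ℕ × List ℕ) (vs : List (Option Bool)) : Option Bool :=
  if b.1 = 0 then none
  else if tag b.1 = 0 then
    Option.map₂ (fun x y => decide (x = y)) (termValue (left b.1, b.2)) (termValue (right b.1, b.2))
  else if tag b.1 = 1 then
    Option.map₂ (fun x y => decide (x ≤ y)) (termValue (left b.1, b.2)) (termValue (right b.1, b.2))
  else if tag b.1 = 2 then (vs.getD 0 none).map not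
  else if tag b.1 = 3 then Option.map₂ and (vs.getD 0 none) (vs.getD 1 none)
  else if tag b.1 = 4 then Option.map₂ or (vs.getD 0 none) (vs.getD 1 none)
  else if tag b.1 = 5 then Option.map₂ (fun x y => !x || y) (vs.getD 0 none) (vs.getD 1 none)
  else if (tag b.1 = 6 ∨ tag b.1 = 7) ∧ (termValue (left b.1, b.2)).isSome ∧ ∀ v ∈ vs, v.isSome then
    if tag b.1 = 6 then some (decide (∀ v ∈ vs, v = some true))
    else some (decide (∃ v ∈ vs, v = some true))
  else none

theorem lt_of_mem_formulaChildren {b b' : ℕ × List ℕ} (h : b' ∈ formulaChildren b) :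
    b'.1 < b.1 := by
  unfold formulaChildren at h
  split_ifs at h with hb <;>
    simp only [List.mem_cons, List.mem_map, List.not_mem_nil, or_false] at h
  · exact h ▸ arg_lt hb
  · rcases h with rfl | rfl
    exacts [left_lt hb, right_lt hb]
  · obtain ⟨x, -, rfl⟩ := h
    exact right_lt hb

/-- `formulaValue (c, l)` is the truth value of the formula with code `c` under `vᵢ ↦ l[i]`, and
`none` if `c` codes no formula whose free variables are among `v₀, …, v_{|l|-1}`. -/
def formulaValue (b : ℕ × List ℕ) : Option Bool :=
  formulaStep b ((formulaChildren b).attach.map fun b' => formulaValue b'.1)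
termination_by b.1
decreasing_by exact lt_of_mem_formulaChildren b'.2

theorem formulaValue_eq (b : ℕ × List ℕ) :
    formulaValue b = formulaStep b ((formulaChildren b).map formulaValue) := by
  rw [formulaValue, List.attach_map_val]

theorem exists_formulaValue_gcode_eq_some {n : ℕ} (θ : Delta0 n) (v : Fin n → ℕ) :
    ∃ b, formulaValue (θ.gcode, List.ofFn v) = some b ∧ (b = true ↔ θ.Sat v) := by
  induction θ with
  | eq t s | le t s =>
    rw [formulaValue_eq]
    simp [formulaStep, Delta0.gcode, Delta0.Sat, termValue_gcode, Option.map₂]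
  | not φ ih =>
    obtain ⟨b, hb, hbφ⟩ := ih v
    rw [formulaValue_eq]
    simp [formulaStep, formulaChildren, Delta0.gcode, Delta0.Sat, hb, ← hbφ]
  | and φ ψ ihφ ihψ | or φ ψ ihφ ihψ | imp φ ψ ihφ ihψ =>
    obtain ⟨b, hb, hbφ⟩ := ihφ v
    obtain ⟨c, hc, hcψ⟩ := ihψ v
    rw [formulaValue_eq]
    cases b <;>
      simp [formulaStep, formulaChildren, Delta0.gcode, Delta0.Sat, Option.map₂, hb, hc, ← hbφ,
        ← hcψ]
  | ball t φ ih =>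
    choose f hf hfφ using fun x => ih (Fin.cons x v)
    simp only [List.ofFn_succ, Fin.cons_zero, Fin.cons_succ] at hf
    refine ⟨decide (∀ x ≤ t.eval v, f x = true), ?_, by simp [Delta0.Sat, hfφ]⟩
    rw [formulaValue_eq]
    simp [formulaStep, formulaChildren, Delta0.gcode, termValue_gcode, hf]
  | bex t φ ih =>
    choose f hf hfφ using fun x => ih (Fin.cons x v)
    simp only [List.ofFn_succ, Fin.cons_zero, Fin.cons_succ] at hf
    refine ⟨decide (∃ x ≤ t.eval v, f x = true), ?_, by simp [Delta0.Sat, hfφ]⟩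
    rw [formulaValue_eq]
    simp [formulaStep, formulaChildren, Delta0.gcode, termValue_gcode, hf]

theorem exists_gcode_eq_of_isSome_formulaValue (c : ℕ) {l : List ℕ}
    (h : (formulaValue (c, l)).isSome) : ∃ θ : Delta0 l.length, θ.gcode = c := by
  induction c using Nat.strong_induction_on generalizing l with
  | _ c ih =>
    rcases eq_or_ne c 0 with rfl | hc
    · simp [formulaValue_eq, formulaStep] at h
    rw [formulaValue_eq] at h
    rw [← mk_tag_arg hc]
    rcases hk : tag c with _ | _ | _ | _ | _ | _ | _ | _ | k <;>
      simp [formulaStep, formulaChildren, hc, hk, Option.isSome_map₂] at h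
    · obtain ⟨t, ht⟩ := exists_gcode_eq_of_isSome_termValue _ h.1
      obtain ⟨s, hs⟩ := exists_gcode_eq_of_isSome_termValue _ h.2
      exact ⟨.eq t s, by simp [Delta0.gcode, ht, hs, pair_left_right]⟩
    · obtain ⟨t, ht⟩ := exists_gcode_eq_of_isSome_termValue _ h.1
      obtain ⟨s, hs⟩ := exists_gcode_eq_of_isSome_termValue _ h.2
      exact ⟨.le t s, by simp [Delta0.gcode, ht, hs, pair_left_right]⟩
    · obtain ⟨φ, hφ⟩ := ih _ (arg_lt hc) h
      exact ⟨.not φ, by simp [Delta0.gcode, hφ]⟩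
    · obtain ⟨φ, hφ⟩ := ih _ (left_lt hc) h.1
      obtain ⟨ψ, hψ⟩ := ih _ (right_lt hc) h.2
      exact ⟨.and φ ψ, by simp [Delta0.gcode, hφ, hψ, pair_left_right]⟩
    · obtain ⟨φ, hφ⟩ := ih _ (left_lt hc) h.1
      obtain ⟨ψ, hψ⟩ := ih _ (right_lt hc) h.2
      exact ⟨.or φ ψ, by simp [Delta0.gcode, hφ, hψ, pair_left_right]⟩
    · obtain ⟨φ, hφ⟩ := ih _ (left_lt hc) h.1
      obtain ⟨ψ, hψ⟩ := ih _ (right_lt hc) h.2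
      exact ⟨.imp φ ψ, by simp [Delta0.gcode, hφ, hψ, pair_left_right]⟩
    -- The instance `x = 0` of the body is always evaluated; it certifies that the body is a
    -- formula in one more variable.
    · obtain ⟨t, ht⟩ := exists_gcode_eq_of_isSome_termValue _ h.1
      obtain ⟨φ, hφ⟩ := ih _ (right_lt hc) (h.2 0 (Nat.zero_le _))
      exact ⟨.ball t φ, by simp [Delta0.gcode, ht, hφ, pair_left_right]⟩
    · obtain ⟨t, ht⟩ := exists_gcode_eq_of_isSome_termValue _ h.1
      obtain ⟨φ, hφ⟩ := ih _ (right_lt hc) (h.2 0 (Nat.zero_le _))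
      exact ⟨.bex t φ, by simp [Delta0.gcode, ht, hφ, pair_left_right]⟩

theorem primrec_formulaChildren : Primrec formulaChildren := by
  have hc : Primrec fun b : ℕ × List ℕ => b.1 := Primrec.fst
  have htag : ∀ k, PrimrecPred fun b : ℕ × List ℕ => tag b.1 = k :=
    fun k => PrimrecRel.comp Primrec.eq (primrec_tag.comp hc) (Primrec.const k)
  have hsub : ∀ {f : ℕ → ℕ}, Primrec f → Primrec fun b : ℕ × List ℕ => (f b.1, b.2) :=
    fun hf => Primrec.pair (hf.comp hc) Primrec.snd
  have hbound : Primrec fun b : ℕ × List ℕ => (termValue (left b.1, b.2)).getD 0 + 1 :=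
    Primrec.succ.comp (Primrec.option_getD.comp (primrec_termValue.comp (hsub primrec_left))
      (Primrec.const 0))
  have hinstances : Primrec fun b : ℕ × List ℕ =>
      (List.range ((termValue (left b.1, b.2)).getD 0 + 1)).map fun x => (right b.1, x :: b.2) :=
    Primrec.list_map (Primrec.list_range.comp hbound)
      (Primrec.pair ((primrec_right.comp hc).comp Primrec.fst)
        (Primrec.list_cons.comp Primrec.snd (Primrec.snd.comp Primrec.fst))).to₂
  exact Primrec.ite (PrimrecRel.comp Primrec.eq hc (Primrec.const 0)) (Primrec.const []) <|
    Primrec.ite (htag 2) (Primrec.list_cons.comp (hsub primrec_arg) (Primrec.const [])) <|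
    Primrec.ite ((htag 3).or ((htag 4).or (htag 5)))
      (Primrec.list_cons.comp (hsub primrec_left)
        (Primrec.list_cons.comp (hsub primrec_right) (Primrec.const []))) <|
    Primrec.ite ((htag 6).or (htag 7)) hinstances (Primrec.const [])

theorem primrec_formulaStep : Primrec₂ formulaStep := by
  have hc : Primrec fun q : (ℕ × List ℕ) × List (Option Bool) => q.1.1 :=
    Primrec.fst.comp Primrec.fst
  have hterm : ∀ {f : ℕ → ℕ}, Primrec f →
      Primrec fun q : (ℕ × List ℕ) × List (Option Bool) => termValue (f q.1.1, q.1.2) :=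
    fun hf => primrec_termValue.comp (Primrec.pair (hf.comp hc) (Primrec.snd.comp Primrec.fst))
  have hv : ∀ i, Primrec fun q : (ℕ × List ℕ) × List (Option Bool) => q.2.getD i none :=
    fun i => (Primrec.list_getD none).comp Primrec.snd (Primrec.const i)
  have htag : ∀ k, PrimrecPred fun q : (ℕ × List ℕ) × List (Option Bool) => tag q.1.1 = k :=
    fun k => PrimrecRel.comp Primrec.eq (primrec_tag.comp hc) (Primrec.const k)
  have hbound : PrimrecPred fun q : (ℕ × List ℕ) × List (Option Bool) =>
      (termValue (left q.1.1, q.1.2)).isSome :=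
    PrimrecRel.comp Primrec.eq (Primrec.option_isSome.comp (hterm primrec_left))
      (Primrec.const true)
  have hsome : PrimrecPred fun v : Option Bool => v.isSome :=
    PrimrecRel.comp Primrec.eq Primrec.option_isSome (Primrec.const true)
  have htrue : PrimrecPred fun v : Option Bool => v = some true :=
    PrimrecRel.comp Primrec.eq Primrec.id (Primrec.const _)
  refine Primrec₂.mk <| Primrec.ite (PrimrecRel.comp Primrec.eq hc (Primrec.const 0))
    (Primrec.const none) <| Primrec.ite (htag 0)
    (Primrec.option_map₂ Primrec.eq.decide (hterm primrec_left) (hterm primrec_right)) <|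
    Primrec.ite (htag 1)
    (Primrec.option_map₂ Primrec.nat_le.decide (hterm primrec_left) (hterm primrec_right)) <|
    Primrec.ite (htag 2) (Primrec.option_map (hv 0) (Primrec.not.comp Primrec.snd).to₂) <|
    Primrec.ite (htag 3) (Primrec.option_map₂ Primrec.and (hv 0) (hv 1)) <|
    Primrec.ite (htag 4) (Primrec.option_map₂ Primrec.or (hv 0) (hv 1)) <|
    Primrec.ite (htag 5)
      (Primrec.option_map₂ (Primrec.or.comp (Primrec.not.comp Primrec.fst) Primrec.snd)
        (hv 0) (hv 1)) <|
    Primrec.ite (((htag 6).or (htag 7)).and (hbound.and (hsome.forall_mem_list.comp Primrec.snd)))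
      (Primrec.ite (htag 6)
        (Primrec.option_some.comp (htrue.forall_mem_list.comp Primrec.snd).decide)
        (Primrec.option_some.comp (htrue.exists_mem_list.comp Primrec.snd).decide))
      (Primrec.const none)

theorem primrec_formulaValue : Primrec formulaValue :=
  Primrec.nat_omega_rec' formulaValue Primrec.fst primrec_formulaChildren
    (Primrec.option_some.comp primrec_formulaStep).to₂ (fun _ _ => lt_of_mem_formulaChildren)
    (fun b => by rw [formulaValue_eq])

def satDelta0 (x a : ℕ) : Bool :=
  formulaValue (x.unpair.2, List.replicate x.unpair.1 a) = some true

theorem satDelta0_sigmaGcode {k : ℕ} (θ : Delta0 k) (a : ℕ) :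
    satDelta0 (Delta0.sigmaGcode ⟨k, θ⟩) a = true ↔ θ.Sat fun _ => a := by
  obtain ⟨b, hb, hbθ⟩ := exists_formulaValue_gcode_eq_some θ fun _ => a
  rw [List.ofFn_const] at hb
  simp only [satDelta0, Delta0.sigmaGcode, Nat.unpair_pair, hb]
  simp [hbθ]

theorem satDelta0_iff (x a : ℕ) : satDelta0 x a = true ↔
    ∃ (k : ℕ) (θ : Delta0 k), Delta0.sigmaGcode ⟨k, θ⟩ = x ∧ θ.Sat fun _ => a := by
  refine ⟨fun h => ?_, fun ⟨k, θ, hx, hθ⟩ => hx ▸ (satDelta0_sigmaGcode θ a).2 hθ⟩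
  have hθ := exists_gcode_eq_of_isSome_formulaValue x.unpair.2
    (l := List.replicate x.unpair.1 a) (by simp_all [satDelta0])
  rw [List.length_replicate] at hθ
  obtain ⟨θ, hθ⟩ := hθ
  have hx : Delta0.sigmaGcode ⟨_, θ⟩ = x := by simp [Delta0.sigmaGcode, hθ]
  rw [← hx] at h
  exact ⟨_, θ, hx, (satDelta0_sigmaGcode θ a).1 h⟩

theorem primrec_satDelta0 : Primrec₂ satDelta0 :=
  (PrimrecRel.comp Primrec.eq
    (primrec_formulaValue.comp (Primrec.pair (Primrec.snd.comp (Primrec.unpair.comp Primrec.fst))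
      (Primrec.list_replicate.comp (Primrec.fst.comp (Primrec.unpair.comp Primrec.fst))
        Primrec.snd)))
    (Primrec.const (some true))).decide.to₂

theorem not_delta0_definable_satDelta0 :
    ¬ ∃ φ : Delta0 2, ∀ x a : ℕ, satDelta0 x a = true ↔ φ.Sat ![x, a] := by
  rintro ⟨φ, hφ⟩
  set e := Delta0.sigmaGcode ⟨2, φ.not⟩
  have hdiag : ![e, e] = fun _ => e := by
    ext i
    fin_cases i <;> rfl
  have h := (satDelta0_sigmaGcode φ.not e).symm.trans (hφ e e)
  rw [hdiag] at h
  exact iff_not_self h.symm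

/-- There is a primitive recursive relation on `ℕ²` that is not definable by any Δ₀ formula
over the standard model of arithmetic; in particular the Δ₀-satisfaction relation
`Sat_{Δ₀} = {(⌜θ⌝, a) : θ ∈ Δ₀, ℕ ⊨ θ(a⃗)}` (for a suitable injective Gödel coding, where `a`
is substituted for every free variable of `θ`) is primitive recursive but not rudimentary. -/
theorem exists_primrec_not_delta0 :
    ∃ R : ℕ → ℕ → Bool,
      Primrec₂ R ∧
      (¬ ∃ φ : Delta0 2, ∀ x a : ℕ, R x a = true ↔ φ.Sat ![x, a]) ∧
      (∃ code : (Σ k, Delta0 k) → ℕ, Function.Injective code ∧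
        ∀ x a : ℕ, R x a = true ↔
          ∃ (k : ℕ) (θ : Delta0 k), code ⟨k, θ⟩ = x ∧ θ.Sat fun _ => a) :=
  ⟨satDelta0, primrec_satDelta0, not_delta0_definable_satDelta0,
    Delta0.sigmaGcode, Delta0.sigmaGcode_injective, satDelta0_iff⟩
end

section
/- (Dyson's theorem) If a function f : ℕ → ℕ is strongly representable in an arbitrary theory T, then f is provably total in T; specifically, if θ strongly represents f, then η(x, y) := [∃!z θ(x,z) ∧ θ(x,y)] ∨ [¬∃!z θ(x,z) ∧ y = 0] witnesses provable totality. -/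
open FirstOrder Language

/-- Function symbols of our arithmetical language: `0` and successor `S`
(so that every natural number `n` has a numeral `n̄ = Sⁿ0`). -/
inductive ArFunc : ℕ → Type
  | zero : ArFunc 0
  | succ : ArFunc 1

/-- Relation symbols of our arithmetical language: `<` and `≤`. -/
inductive ArRel : ℕ → Type
  | lt : ArRel 2
  | le : ArRel 2

/-- The first-order language `⟨0, S, <, ≤⟩`. -/
def Lar : Language := ⟨ArFunc, ArRel⟩

/-- The numeral `n̄ = Sⁿ0`. -/
def num {α : Type} : ℕ → Lar.Term α
  | 0 => Term.func ArFunc.zero ![]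
  | n + 1 => Term.func ArFunc.succ ![num n]

/-- The formula `t < s`. -/
def ltF {α : Type} (t s : Lar.Term α) : Lar.Formula α :=
  Relations.formula₂ ArRel.lt t s

/-- The formula `t ≤ s`. -/
def leF {α : Type} (t s : Lar.Term α) : Lar.Formula α :=
  Relations.formula₂ ArRel.le t s

/-- Universal quantification of a formula in one variable, as a sentence `∀ y, φ(y)`. -/
noncomputable def allS (φ : Lar.Formula (Fin 1)) : Lar.Sentence :=
  Formula.iAlls (Fin 1) (φ.relabel (fun _ : Fin 1 => (Sum.inr 0 : Empty ⊕ Fin 1)))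

/-- The finite disjunction `y = 0̄ ∨ y = 1̄ ∨ ⋯ ∨ y = n̄` (in the free variable `y`). -/
def eqDisj : ℕ → Lar.Formula (Fin 1)
  | 0 => Term.equal (Term.var 0) (num 0)
  | n + 1 => eqDisj n ⊔ Term.equal (Term.var 0) (num (n + 1))

/-- `T` proves `θ(n̄, y) ∧ θ(n̄, z) → y = z` universally, i.e. the sentence
`∀ y z (θ(n̄, y) ∧ θ(n̄, z) → y = z)`. -/
noncomputable def uniqueSent (θ : Lar.Formula (Fin 2)) (n : ℕ) : Lar.Sentence :=
  Formula.iAlls (Fin 2) (Formula.relabel (fun i : Fin 2 => (Sum.inr i : Empty ⊕ Fin 2))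
    (Formula.imp ((θ.subst ![num n, Term.var 0]) ⊓ (θ.subst ![num n, Term.var 1]))
      (Term.equal (Term.var 0) (Term.var 1))))

/-- The sentence `φ(n̄, m̄)`: substitute the numerals `n̄, m̄` for the two free variables. -/
def substS (φ : Lar.Formula (Fin 2)) (n m : ℕ) : Lar.Sentence :=
  φ.subst ![num n, num m]

/-- The formula `∃! z, θ(x, z)`, i.e. `∃ z (θ(x, z) ∧ ∀ v (θ(x, v) → v = z))`,
in the single free variable `x`. -/
noncomputable def exUniq (θ : Lar.Formula (Fin 2)) : Lar.Formula (Fin 1) :=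
  Formula.iExs (Fin 1) (Formula.relabel (![Sum.inl 0, Sum.inr 0] : Fin 2 → Fin 1 ⊕ Fin 1)
    (θ ⊓ Formula.iAlls (Fin 1) (Formula.relabel
      (![Sum.inl 0, Sum.inl 1, Sum.inr 0] : Fin 3 → Fin 2 ⊕ Fin 1)
      (Formula.imp (θ.relabel ![0, 2]) (Term.equal (Term.var 2) (Term.var 1))))))

/-- Dyson's formula `η(x, y) := [∃!z θ(x,z) ∧ θ(x,y)] ∨ [¬∃!z θ(x,z) ∧ y = 0̄]`. -/
noncomputable def dysonEta (θ : Lar.Formula (Fin 2)) : Lar.Formula (Fin 2) :=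
  (((exUniq θ).relabel ![0]) ⊓ θ) ⊔
    ((Formula.not ((exUniq θ).relabel ![0])) ⊓ Term.equal (Term.var 1) (num 0))

/-- The sentence `∀ x ∃ y (η(x, y) ∧ ∀ z (η(x, z) → y = z))`. -/
noncomputable def provTotalSent (η : Lar.Formula (Fin 2)) : Lar.Sentence :=
  allS (Formula.iExs (Fin 1) (Formula.relabel (![Sum.inl 0, Sum.inr 0] : Fin 2 → Fin 1 ⊕ Fin 1)
    (η ⊓ Formula.iAlls (Fin 1) (Formula.relabel
      (![Sum.inl 0, Sum.inl 1, Sum.inr 0] : Fin 3 → Fin 2 ⊕ Fin 1)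
      (Formula.imp (η.relabel ![0, 2]) (Term.equal (Term.var 1) (Term.var 2)))))))

/-!
Exactly one of the two disjuncts of `η(x, y)` can apply, according as `∃! z θ(x, z)` holds or
not, and each of them determines `y` uniquely; so `∀ x ∃! y η(x, y)` holds in every structure,
whatever `θ` is. Where `θ(n̄, ·)` is functional, as the uniqueness hypothesis guarantees in every
model of `T`, `η(n̄, ·)` coincides with `θ(n̄, ·)`.
-/

theorem Matrix.comp_vecCons {α β : Type*} {n : ℕ} (g : α → β) (a : α) (v : Fin n → α) :
    g ∘ Matrix.vecCons a v = Matrix.vecCons (g a) (g ∘ v) :=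
  Fin.comp_cons g a v

theorem FirstOrder.Language.Formula.realize_subst {L : Language} {M : Type*} [L.Structure M]
    {α β : Type*} {φ : L.Formula α} {tf : α → L.Term β} {v : β → M} :
    Formula.Realize (φ.subst tf) v ↔ φ.Realize (Term.realize v ∘ tf) :=
  BoundedFormula.realize_subst

section DysonRel

variable {α β : Type*}

def dysonRel (R : α → β → Prop) (d : β) (x : α) (y : β) : Prop :=
  (∃! z, R x z) ∧ R x y ∨ ¬(∃! z, R x z) ∧ y = d

variable {R : α → β → Prop} {d : β} {x : α} {y : β}

theorem dysonRel_iff_of_existsUnique (h : ∃! z, R x z) : dysonRel R d x y ↔ R x y := by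
  simp [dysonRel, h]

theorem dysonRel_iff_of_not_existsUnique (h : ¬∃! z, R x z) : dysonRel R d x y ↔ y = d := by
  simp [dysonRel, h]

theorem dysonRel_of_unique (hxy : R x y) (huniq : ∀ z z', R x z → R x z' → z = z') :
    dysonRel R d x y :=
  (dysonRel_iff_of_existsUnique ⟨y, hxy, fun z hz => huniq z y hz hxy⟩).mpr hxy

theorem existsUnique_dysonRel (x : α) : ∃! y, dysonRel R d x y := by
  by_cases h : ∃! z, R x z
  · simpa only [dysonRel_iff_of_existsUnique h] using h
  · simpa only [dysonRel_iff_of_not_existsUnique h] using existsUnique_eq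

end DysonRel

section Semantics

variable {M : Type*} [Lar.Structure M]

variable (M) in
def numValue : ℕ → M
  | 0 => Structure.funMap (L := Lar) ArFunc.zero ![]
  | n + 1 => Structure.funMap (L := Lar) ArFunc.succ ![numValue n]

@[simp]
theorem realize_num {α : Type} (v : α → M) (n : ℕ) : (num n).realize v = numValue M n := by
  induction n with
  | zero => exact congrArg (Structure.funMap _) (Subsingleton.elim _ _)
  | succ n ih => exact congrArg (Structure.funMap _) (funext fun i => by fin_cases i; exact ih)

theorem realize_substS (φ : Lar.Formula (Fin 2)) (n m : ℕ) (v : Empty → M) :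
    Formula.Realize (substS φ n m) v ↔ φ.Realize ![numValue M n, numValue M m] := by
  simp [substS, Formula.realize_subst, Matrix.comp_vecCons, Matrix.empty_eq]

theorem realize_uniqueSent (θ : Lar.Formula (Fin 2)) (n : ℕ) (v : Empty → M) :
    Formula.Realize (uniqueSent θ n) v ↔
      ∀ y z, θ.Realize ![numValue M n, y] → θ.Realize ![numValue M n, z] → y = z := by
  simp [uniqueSent, Formula.realize_subst, Fin.forall_fin_succ_pi, Matrix.comp_vecCons,
    Matrix.empty_eq]

theorem realize_exUniq (θ : Lar.Formula (Fin 2)) (w : Fin 1 → M) :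
    (exUniq θ).Realize w ↔ ∃! z, θ.Realize ![w 0, z] := by
  simp [exUniq, Fin.exists_fin_succ_pi, Fin.forall_fin_succ_pi, Matrix.comp_vecCons,
    Matrix.empty_eq, ExistsUnique]

theorem realize_dysonEta (θ : Lar.Formula (Fin 2)) (x y : M) :
    (dysonEta θ).Realize ![x, y] ↔
      dysonRel (fun a b => θ.Realize ![a, b]) (numValue M 0) x y := by
  simp [dysonEta, dysonRel, realize_exUniq, Matrix.comp_vecCons, Matrix.empty_eq]

theorem realize_provTotalSent (η : Lar.Formula (Fin 2)) (v : Empty → M) :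
    Formula.Realize (provTotalSent η) v ↔ ∀ x : M, ∃! y, η.Realize ![x, y] := by
  simp [provTotalSent, allS, Fin.exists_fin_succ_pi, Fin.forall_fin_succ_pi, Matrix.comp_vecCons,
    Matrix.empty_eq, ExistsUnique, eq_comm]

end Semantics

/-- (Dyson's theorem.) If `f : ℕ → ℕ` is strongly representable by `θ` in an arbitrary theory
`T` (no assumptions on `T` beyond first-order logic), then `f` is provably total in `T`,
witnessed by `η(x, y) := [∃!z θ(x,z) ∧ θ(x,y)] ∨ [¬∃!z θ(x,z) ∧ y = 0̄]`. -/
theorem strongly_representable_implies_provably_total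
    (T : Lar.Theory) (f : ℕ → ℕ) (θ : Lar.Formula (Fin 2))
    (h1 : ∀ n : ℕ, T ⊨ᵇ substS θ n (f n))
    (h2 : ∀ n : ℕ, T ⊨ᵇ uniqueSent θ n) :
    (∀ n : ℕ, T ⊨ᵇ substS (dysonEta θ) n (f n)) ∧
      T ⊨ᵇ provTotalSent (dysonEta θ) := by
  simp only [Theory.models_formula_iff, realize_substS, realize_uniqueSent, realize_dysonEta,
    realize_provTotalSent] at h1 h2 ⊢
  exact ⟨fun n M v => dysonRel_of_unique (h1 n M v) (h2 n M v),
    fun M v x => existsUnique_dysonRel x⟩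
end
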